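/- arXiv:1406.4573 — 5 statements merged into one kernel-verified Lean document; each statement's English description precedes it below -/
import Mathlib

section
/- With c₁ = √((λ−μ−ψ)² + 4λψ), c₂ = −(λ−μ−ψ)/c₁ and p₀ as defined, the function p₀ satisfies the ODE p₀'(x) = −(λ+μ+ψ)p₀(x) + μ + λ·p₀(x)², for all x ≥ 0, with initial condition p₀(0) = 1. -/
noncomputable def p0 (lam mu psi : ℝ) (x : ℝ) : ℝ :=
  let c1 := Real.sqrt ((lam - mu - psi)^2 + 4*lam*psi)
  let c2 := -(lam - mu - psi) / c1
  (lam + mu + psi + c1 * ((Real.exp (-c1*x) * (1 - c2) - (1 + c2)) /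
    (Real.exp (-c1*x) * (1 - c2) + (1 + c2)))) / (2*lam)

open Real

/-! With `g x = (e^{-c x} k - m) / (e^{-c x} k + m)` (a rescaled `tanh`) one has `g' = c/2 (g² - 1)`,
and an affine image `(a + c g) / (2λ)` of any such `g` solves the Riccati equation
`p' = -a p + μ + λ p²` as soon as `a² - 4λμ = c²`. The definition of `p0` is of this form with
`a = λ + μ + ψ`, `k = 1 - c₂`, `m = 1 + c₂`, and `|c₂| < 1` keeps the denominator positive. -/

noncomputable def expRatio (c k m x : ℝ) : ℝ :=
  (exp (-c * x) * k - m) / (exp (-c * x) * k + m)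

theorem expRatio_zero (c k m : ℝ) : expRatio c k m 0 = (k - m) / (k + m) := by
  simp [expRatio]

theorem hasDerivAt_expRatio (c k m x : ℝ) (hx : exp (-c * x) * k + m ≠ 0) :
    HasDerivAt (expRatio c k m) (c / 2 * (expRatio c k m x ^ 2 - 1)) x := by
  have hexp : HasDerivAt (fun y => exp (-c * y)) (exp (-c * x) * -c) x := by
    simpa using ((hasDerivAt_id x).const_mul (-c)).exp
  refine (((hexp.mul_const k).sub_const m).div ((hexp.mul_const k).add_const m) hx).congr_deriv ?_
  unfold expRatio
  generalize exp (-c * x) = E at hx ⊢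
  field_simp
  ring

theorem hasDerivAt_riccati {g : ℝ → ℝ} {a c lam mu x : ℝ} (hlam : lam ≠ 0)
    (hdisc : a ^ 2 - 4 * lam * mu = c ^ 2) (hg : HasDerivAt g (c / 2 * (g x ^ 2 - 1)) x) :
    HasDerivAt (fun y => (a + c * g y) / (2 * lam))
      (-a * ((a + c * g x) / (2 * lam)) + mu + lam * ((a + c * g x) / (2 * lam)) ^ 2) x := by
  refine (((hg.const_mul c).const_add a).div_const (2 * lam)).congr_deriv ?_
  field_simp
  linear_combination hdisc

theorem abs_div_sqrt_sq_add_lt_one (b : ℝ) {d : ℝ} (hd : 0 < d) : |b / √(b ^ 2 + d)| < 1 := by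
  have hpos : 0 < √(b ^ 2 + d) := sqrt_pos.mpr (by positivity)
  rw [abs_div, abs_of_pos hpos, div_lt_one hpos, ← sqrt_sq_eq_abs]
  exact sqrt_lt_sqrt (sq_nonneg b) (lt_add_of_pos_right _ hd)

theorem stmt2_general (lam mu psi : ℝ) (hlam : 0 < lam) (hpsi : 0 < psi) :
    p0 lam mu psi 0 = 1 ∧
    ∀ x : ℝ, 0 ≤ x →
      HasDerivAt (p0 lam mu psi)
        (-(lam + mu + psi) * p0 lam mu psi x + mu + lam * (p0 lam mu psi x)^2) x := by
  set b := lam - mu - psi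
  set c1 := √(b ^ 2 + 4 * lam * psi)
  set c2 := -b / c1
  have hdisc : b ^ 2 + 4 * lam * psi > 0 := by positivity
  have hc1 : c1 ≠ 0 := (sqrt_pos.mpr hdisc).ne'
  have hp0 : p0 lam mu psi =
      fun y => (lam + mu + psi + c1 * expRatio c1 (1 - c2) (1 + c2) y) / (2 * lam) := rfl
  have hc2 : |c2| < 1 := by
    show |-b / c1| < 1
    rw [neg_div, abs_neg]
    exact abs_div_sqrt_sq_add_lt_one b (by positivity)
  constructor
  · simp only [hp0, expRatio_zero]
    have hc1c2 : c1 * c2 = -b := mul_div_cancel₀ _ hc1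
    have hratio : (1 - c2 - (1 + c2)) / (1 - c2 + (1 + c2)) = -c2 := by ring
    rw [hratio, mul_neg, hc1c2, div_eq_one_iff_eq (by positivity)]
    ring
  · intro x _
    rw [hp0]
    refine hasDerivAt_riccati hlam.ne' ?_ (hasDerivAt_expRatio _ _ _ x ?_)
    · rw [sq_sqrt hdisc.le]
      ring
    · obtain ⟨hc2_gt, hc2_lt⟩ := abs_lt.mp hc2
      exact (add_pos (mul_pos (exp_pos _) (by linarith)) (by linarith)).ne'

theorem stmt2 (lam mu psi : ℝ) (hlam : 0 < lam) (hmu : 0 < mu) (hpsi : 0 < psi) :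
    p0 lam mu psi 0 = 1 ∧
    ∀ x : ℝ, 0 ≤ x →
      HasDerivAt (p0 lam mu psi)
        (-(lam + mu + psi) * p0 lam mu psi x + mu + lam * (p0 lam mu psi x)^2) x :=
  stmt2_general lam mu psi hlam hpsi
end

section
/- With c₁, c₂ as above and q(x) = 4/(2(1−c₂²) + e^{−c₁x}(1−c₂)² + e^{c₁x}(1+c₂)²), the function q satisfies q(0) = 1 and q'(x) = −(λ+μ+ψ)q(x) + 2λ·p₀(x)·q(x) for all x ≥ 0. -/
noncomputable def q (lam mu psi : ℝ) (x : ℝ) : ℝ :=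
  let c1 := Real.sqrt ((lam - mu - psi)^2 + 4*lam*psi)
  let c2 := -(lam - mu - psi) / c1
  4 / (2*(1 - c2^2) + Real.exp (-c1*x) * (1 - c2)^2 + Real.exp (c1*x) * (1 + c2)^2)

open Real

theorem hasDerivAt_mul_exp_div_sq (k a b c x : ℝ) (h : a * exp (-c * x) + b ≠ 0) :
    HasDerivAt (fun y ↦ k * exp (-c * y) / (a * exp (-c * y) + b) ^ 2)
      (c * ((a * exp (-c * x) - b) / (a * exp (-c * x) + b)) *
        (k * exp (-c * x) / (a * exp (-c * x) + b) ^ 2)) x := by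
  have hexp : HasDerivAt (fun y ↦ exp (-c * y)) (-c * exp (-c * x)) x := by
    simpa [mul_comm] using ((hasDerivAt_id x).const_mul (-c)).exp
  have hden := ((hexp.const_mul a).add_const b).fun_pow 2
  refine ((hexp.const_mul k).div hden (pow_ne_zero 2 h)).congr_deriv ?_
  generalize exp (-c * x) = u at h ⊢
  simp only [Nat.cast_ofNat, Nat.add_one_sub_one, pow_one]
  field_simp
  ring

namespace BirthDeathSampling

variable (lam mu psi : ℝ)

noncomputable def c1 : ℝ := √((lam - mu - psi) ^ 2 + 4 * lam * psi)

noncomputable def c2 : ℝ := -(lam - mu - psi) / c1 lam mu psi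

theorem abs_c2_le_one (h : 0 ≤ lam * psi) : |c2 lam mu psi| ≤ 1 := by
  rw [c2, abs_div, abs_neg, c1, abs_of_nonneg (sqrt_nonneg _)]
  exact div_le_one_of_le₀ (abs_le_sqrt (by nlinarith)) (sqrt_nonneg _)

theorem q_eq_exp_div_sq (x : ℝ) :
    q lam mu psi x = 4 * exp (-c1 lam mu psi * x) /
      ((1 - c2 lam mu psi) * exp (-c1 lam mu psi * x) + (1 + c2 lam mu psi)) ^ 2 := by
  dsimp only [q]
  rw [← c1, ← c2]
  set u := exp (-c1 lam mu psi * x)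
  have hv : exp (c1 lam mu psi * x) = u⁻¹ := by rw [← exp_neg, neg_mul, neg_neg]
  have hu : u ≠ 0 := (exp_pos _).ne'
  rw [hv]
  field_simp
  ring

theorem two_mul_mul_p0 (hlam : lam ≠ 0) (x : ℝ) :
    2 * lam * p0 lam mu psi x = lam + mu + psi + c1 lam mu psi *
      (((1 - c2 lam mu psi) * exp (-c1 lam mu psi * x) - (1 + c2 lam mu psi)) /
        ((1 - c2 lam mu psi) * exp (-c1 lam mu psi * x) + (1 + c2 lam mu psi))) := by
  dsimp only [p0]
  rw [← c1, ← c2]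
  rw [mul_div_cancel₀ _ (by positivity)]
  ring

end BirthDeathSampling

open BirthDeathSampling

theorem one_sub_mul_add_one_add_pos {c u : ℝ} (hc : |c| ≤ 1) (hu : 0 < u) :
    0 < (1 - c) * u + (1 + c) := by
  obtain ⟨hc₁, hc₂⟩ := abs_le.mp hc
  nlinarith [mul_nonneg (sub_nonneg.2 hc₂) hu.le]

theorem stmt3_general (lam mu psi : ℝ) (hlam : 0 < lam) (hpsi : 0 < psi) :
    q lam mu psi 0 = 1 ∧
    ∀ x : ℝ, 0 ≤ x →
      HasDerivAt (q lam mu psi)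
        (-(lam + mu + psi) * q lam mu psi x + 2 * lam * p0 lam mu psi x * q lam mu psi x) x := by
  have hq : q lam mu psi = fun y ↦ 4 * exp (-c1 lam mu psi * y) /
      ((1 - c2 lam mu psi) * exp (-c1 lam mu psi * y) + (1 + c2 lam mu psi)) ^ 2 :=
    funext (q_eq_exp_div_sq lam mu psi)
  refine ⟨by norm_num [q_eq_exp_div_sq], fun x _ ↦ ?_⟩
  have hc2 := abs_c2_le_one lam mu psi (mul_pos hlam hpsi).le
  rw [← add_mul, two_mul_mul_p0 lam mu psi hlam.ne', hq]
  refine (hasDerivAt_mul_exp_div_sq 4 _ _ _ x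
    (one_sub_mul_add_one_add_pos hc2 (exp_pos _)).ne').congr_deriv ?_
  ring

theorem stmt3 (lam mu psi : ℝ) (hlam : 0 < lam) (hmu : 0 < mu) (hpsi : 0 < psi) :
    q lam mu psi 0 = 1 ∧
    ∀ x : ℝ, 0 ≤ x →
      HasDerivAt (q lam mu psi)
        (-(lam + mu + psi) * q lam mu psi x + 2 * lam * p0 lam mu psi x * q lam mu psi x) x :=
  stmt3_general lam mu psi hlam hpsi
end

section
/- If λ−μ−ψ = λ'−μ'−ψ' and λψ = λ'ψ', then λ·(1 − p₀(x; λ,μ,ψ)) = λ'·(1 − p₀(x; λ',μ',ψ')) for all x ≥ 0, where p₀(x; λ,μ,ψ) denotes the no-sampled-descendant probability with parameters (λ,μ,ψ). -/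
noncomputable def sampledLineageRate (d f x : ℝ) : ℝ :=
  let c1 := Real.sqrt (d^2 + 4*f)
  let c2 := -d / c1
  (d - c1 * ((Real.exp (-c1*x) * (1 - c2) - (1 + c2)) /
    (Real.exp (-c1*x) * (1 - c2) + (1 + c2)))) / 2

theorem mul_one_sub_p0_eq_sampledLineageRate (lam mu psi x : ℝ) (hlam : lam ≠ 0) :
    lam * (1 - p0 lam mu psi x) = sampledLineageRate (lam - mu - psi) (lam * psi) x := by
  rw [p0, sampledLineageRate, mul_assoc 4 lam psi]
  field_simp
  ring

theorem stmt6_general (lam mu psi lam' mu' psi' : ℝ)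
    (hlam : 0 < lam)
    (hlam' : 0 < lam')
    (hd : lam - mu - psi = lam' - mu' - psi')
    (hf : lam * psi = lam' * psi') :
    ∀ x : ℝ, 0 ≤ x →
      lam * (1 - p0 lam mu psi x) = lam' * (1 - p0 lam' mu' psi' x) := by
  intro x _
  rw [mul_one_sub_p0_eq_sampledLineageRate lam mu psi x hlam.ne',
    mul_one_sub_p0_eq_sampledLineageRate lam' mu' psi' x hlam'.ne', hd, hf]

theorem stmt6 (lam mu psi lam' mu' psi' : ℝ)
    (hlam : 0 < lam) (hmu : 0 < mu) (hpsi : 0 < psi)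
    (hlam' : 0 < lam') (hmu' : 0 < mu') (hpsi' : 0 < psi')
    (hd : lam - mu - psi = lam' - mu' - psi')
    (hf : lam * psi = lam' * psi') :
    ∀ x : ℝ, 0 ≤ x →
      lam * (1 - p0 lam mu psi x) = lam' * (1 - p0 lam' mu' psi' x) :=
  stmt6_general lam mu psi lam' mu' psi' hlam hlam' hd hf
end

section
/- In the skyline sampled ancestor model, the function g_{i,e}(t) = g_{i,e}(t_e)·q_i(t)/q_i(t_e) solves the ODE d/dt g_{i,e}(t) = −(λ_i+μ_i+ψ_i)·g_{i,e}(t) + 2λ_i·p_i(t)·g_{i,e}(t) on [t_e, t_b] with the given initial value at t_e, where q_i(t) = 4e^{A_i(t−t_i)}/(e^{A_i(t−t_i)}(1+B_i) + (1−B_i))² and p_i(t) = (λ_i+μ_i+ψ_i − A_i·(e^{A_i(t−t_i)}(1+B_i) − (1−B_i))/(e^{A_i(t−t_i)}(1+B_i) + (1−B_i)))/(2λ_i). -/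
/-
With `E t = exp (A (t - tᵢ))` and `D = E (1 + B) + (1 - B)` one has `E' = A E`, so the logarithmic
derivative of `qᵢ = 4 E / D²` is `A - 2 A E (1 + B) / D = -A (E (1 + B) - (1 - B)) / D`, and this is
exactly `-(λ + μ + ψ) + 2 λ pᵢ`. Hence every constant multiple of `qᵢ` solves the linear ODE, and
`gₑ qᵢ / qᵢ(tₑ)` is the one taking the value `gₑ` at `tₑ`.
-/

open Real

theorem hasDerivAt_exp_mul_sub (A c t : ℝ) :
    HasDerivAt (fun s => exp (A * (s - c))) (A * exp (A * (t - c))) t := by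
  have h : HasDerivAt (fun s => A * (s - c)) A t := by
    simpa using ((hasDerivAt_id t).sub_const c).const_mul A
  simpa [mul_comm] using h.exp

theorem hasDerivAt_four_exp_div_sq (A B c t : ℝ)
    (hD : exp (A * (t - c)) * (1 + B) + (1 - B) ≠ 0) :
    HasDerivAt (fun s => 4 * exp (A * (s - c)) / (exp (A * (s - c)) * (1 + B) + (1 - B)) ^ 2)
      (-A * ((exp (A * (t - c)) * (1 + B) - (1 - B)) / (exp (A * (t - c)) * (1 + B) + (1 - B)))
        * (4 * exp (A * (t - c)) / (exp (A * (t - c)) * (1 + B) + (1 - B)) ^ 2)) t := by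
  have hE := hasDerivAt_exp_mul_sub A c t
  have hDen := ((hE.mul_const (1 + B)).add_const (1 - B)).fun_pow 2
  refine ((hE.const_mul 4).div hDen (pow_ne_zero 2 hD)).congr_deriv ?_
  norm_num
  field_simp
  ring

theorem stmt9_general (lam mu psi A B ti te tb ge : ℝ)
    (hlam : 0 < lam)
    (htetb : te ≤ tb)
    (qi : ℝ → ℝ)
    (hqi : qi = fun t => 4 * Real.exp (A*(t - ti)) /
      (Real.exp (A*(t - ti)) * (1 + B) + (1 - B))^2)
    (pi : ℝ → ℝ)
    (hpi : pi = fun t => (lam + mu + psi - A * ((Real.exp (A*(t - ti)) * (1 + B) - (1 - B)) /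
      (Real.exp (A*(t - ti)) * (1 + B) + (1 - B)))) / (2*lam))
    (hden : ∀ t ∈ Set.Icc te tb, Real.exp (A*(t - ti)) * (1 + B) + (1 - B) ≠ 0) :
    (fun t => ge * qi t / qi te) te = ge ∧
    ∀ t ∈ Set.Icc te tb,
      HasDerivAt (fun s => ge * qi s / qi te)
        (-(lam + mu + psi) * (ge * qi t / qi te)
          + 2 * lam * pi t * (ge * qi t / qi te)) t := by
  subst hqi hpi
  have hqte : 4 * exp (A * (te - ti)) / (exp (A * (te - ti)) * (1 + B) + (1 - B)) ^ 2 ≠ 0 :=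
    div_ne_zero (by positivity) (pow_ne_zero 2 (hden te ⟨le_rfl, htetb⟩))
  refine ⟨mul_div_cancel_right₀ ge hqte, fun t ht => ?_⟩
  have hD := hden t ht
  refine (((hasDerivAt_four_exp_div_sq A B ti t hD).const_mul ge).div_const _).congr_deriv ?_
  field_simp
  ring

theorem stmt9 (lam mu psi A B ti te tb ge : ℝ)
    (hlam : 0 < lam) (hmu : 0 < mu) (hpsi : 0 < psi)
    (htetb : te ≤ tb)
    (qi : ℝ → ℝ)
    (hqi : qi = fun t => 4 * Real.exp (A*(t - ti)) /
      (Real.exp (A*(t - ti)) * (1 + B) + (1 - B))^2)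
    (pi : ℝ → ℝ)
    (hpi : pi = fun t => (lam + mu + psi - A * ((Real.exp (A*(t - ti)) * (1 + B) - (1 - B)) /
      (Real.exp (A*(t - ti)) * (1 + B) + (1 - B)))) / (2*lam))
    (hden : ∀ t ∈ Set.Icc te tb, Real.exp (A*(t - ti)) * (1 + B) + (1 - B) ≠ 0) :
    (fun t => ge * qi t / qi te) te = ge ∧
    ∀ t ∈ Set.Icc te tb,
      HasDerivAt (fun s => ge * qi s / qi te)
        (-(lam + mu + psi) * (ge * qi t / qi te)
          + 2 * lam * pi t * (ge * qi t / qi te)) t :=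
  stmt9_general lam mu psi A B ti te tb ge hlam htetb qi hqi pi hpi hden
end

section
/- The probability that a lineage alive at time t before the present survives to the present and is ρ-sampled, 1 − p̂₀(t) = ρ(λ−μ)/(λρ + (λ(1−ρ)−μ)e^{−(λ−μ)t}), satisfies λ·(1 − p̂₀(t)) = λρ(λ−μ)/(λρ + (λ−μ−λρ)e^{−(λ−μ)t}), which depends on (λ, μ, ρ) only through λ−μ and λρ. In particular, if λ−μ = λ'−μ' and λρ = λ'ρ', then λ(1−p̂₀(t)) = λ'(1−p̂₀'(t)) for all t. -/
noncomputable def phat0 (lam mu rho : ℝ) (t : ℝ) : ℝ :=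
  1 - rho * (lam - mu) / (lam * rho + (lam * (1 - rho) - mu) * Real.exp (-(lam - mu) * t))

lemma mul_one_sub_phat0 (lam mu rho t : ℝ) :
    lam * (1 - phat0 lam mu rho t)
      = lam * rho * (lam - mu) /
        (lam * rho + (lam - mu - lam * rho) * Real.exp (-(lam - mu) * t)) := by
  rw [phat0, sub_sub_cancel, mul_div_assoc', ← mul_assoc]
  ring

theorem stmt18_general (lam mu rho lam' mu' rho' : ℝ)
    (hd : lam - mu = lam' - mu') (hlr : lam * rho = lam' * rho') :
    (∀ t : ℝ, lam * (1 - phat0 lam mu rho t)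
        = lam * rho * (lam - mu) /
          (lam * rho + (lam - mu - lam * rho) * Real.exp (-(lam - mu) * t))) ∧
    ∀ t : ℝ, lam * (1 - phat0 lam mu rho t) = lam' * (1 - phat0 lam' mu' rho' t) := by
  refine ⟨mul_one_sub_phat0 lam mu rho, fun t => ?_⟩
  rw [mul_one_sub_phat0, mul_one_sub_phat0, ← hd, ← hlr]

theorem stmt18 (lam mu rho lam' mu' rho' : ℝ)
    (hmu : 0 < mu) (hlm : mu < lam) (hrho0 : 0 < rho) (hrho1 : rho ≤ 1)
    (hmu' : 0 < mu') (hlm' : mu' < lam') (hrho0' : 0 < rho') (hrho1' : rho' ≤ 1)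
    (hd : lam - mu = lam' - mu') (hlr : lam * rho = lam' * rho') :
    (∀ t : ℝ, lam * (1 - phat0 lam mu rho t)
        = lam * rho * (lam - mu) /
          (lam * rho + (lam - mu - lam * rho) * Real.exp (-(lam - mu) * t))) ∧
    ∀ t : ℝ, lam * (1 - phat0 lam mu rho t) = lam' * (1 - phat0 lam' mu' rho' t) :=
  stmt18_general lam mu rho lam' mu' rho' hd hlr
end
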